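/- arXiv:1207.3755 — 3 statements merged into one kernel-verified Lean document; each statement's English description precedes it below -/
import Mathlib

section
/- For n ≥ 2, the number b_{n,1,r,ℓ} of ascent sequences of length n avoiding 0012, not ending in 0, with exactly 1 ascent, exactly r zeros, and fwd value ℓ equals 1 if r + ℓ = n (with 1 ≤ r, ℓ ≤ n−1) and equals 0 otherwise. -/
/-- Number of ascents of a sequence of non-negative integers:
indices `j` with `x j < x (j+1)`. -/
def ascents (l : List ℕ) : ℕ :=
  ((l.zip l.tail).filter (fun p => p.1 < p.2)).length

/-- `x` is an ascent sequence: it starts with 0 and each subsequent letter is at most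
one more than the number of ascents of the preceding prefix. -/
def IsAscentSeq (x : List ℕ) : Prop :=
  (∀ h : 0 < x.length, x.get ⟨0, h⟩ = 0) ∧
  ∀ i : Fin x.length, 0 < (i : ℕ) → x.get i ≤ ascents (x.take (i : ℕ)) + 1

/-- `p` contains the pattern `t`: `p` has a subsequence order-isomorphic to `t`. -/
def Contains (p t : List ℕ) : Prop :=
  ∃ f : Fin t.length → Fin p.length, StrictMono f ∧
    ∀ i j : Fin t.length, t.get i < t.get j ↔ p.get (f i) < p.get (f j)

/-- `p` avoids the pattern `t`. -/
def Avoids (p t : List ℕ) : Prop := ¬ Contains p t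

/-- `fwd x` is the length of the maximal final weakly decreasing
run of consecutive letters at the end of `x`. -/
def fwd (x : List ℕ) : ℕ :=
  Nat.findGreatest
    (fun k => (x.drop (x.length - k)).IsChain (fun a b => b ≤ a)) x.length

/-- `bseq n m r ℓ` is the number of ascent sequences of length `n` avoiding `0012`,
not ending in the letter `0`, with exactly `m` ascents, exactly `r` zeros, and
`fwd` value `ℓ`. -/
noncomputable def bseq (n m r ℓ : ℕ) : ℕ :=
  {x : List ℕ | x.length = n ∧ IsAscentSeq x ∧ Avoids x [0, 0, 1, 2] ∧
    x.getLast? ≠ some 0 ∧ ascents x = m ∧ x.count 0 = r ∧ fwd x = ℓ}.ncard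

/-! Before its only ascent an ascent sequence is weakly decreasing from its initial `0`, hence
constant `0`; the defining inequality caps the letter after the ascent at `1`; from there on the
sequence is weakly decreasing from `1` and does not end in `0`, hence constant `1`. So the only
candidate is `0^r 1^ℓ` with `r, ℓ ≥ 1`, which has `r` zeros, `fwd` value `ℓ`, and avoids `0012`
because it uses only two letters. -/

lemma ascents_cons_cons (a b : ℕ) (l : List ℕ) :
    ascents (a :: b :: l) = (if a < b then 1 else 0) + ascents (b :: l) := by
  simp only [ascents, List.tail_cons, List.zip_cons_cons, List.filter_cons]
  split <;> simp_all [Nat.add_comm]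

lemma ascents_eq_zero_iff (l : List ℕ) :
    ascents l = 0 ↔ l.IsChain (· ≥ ·) := by
  induction l with
  | nil => simp [ascents]
  | cons a l ih =>
    cases l with
    | nil => simp [ascents]
    | cons b l =>
      rw [ascents_cons_cons, List.isChain_cons_cons, ← ih]
      split <;> omega

lemma ascents_replicate_append (r a : ℕ) (l : List ℕ) :
    ascents (List.replicate (r + 1) a ++ l) = ascents (a :: l) := by
  induction r with
  | zero => rfl
  | succ r ih =>
    rw [List.replicate_succ, List.cons_append, ← ih, List.replicate_succ, List.cons_append,
      ascents_cons_cons]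
    simp

lemma ascents_replicate (r a : ℕ) : ascents (List.replicate r a) = 0 :=
  (ascents_eq_zero_iff _).2 (List.isChain_replicate_of_rel r le_rfl)

lemma List.exists_eq_replicate_append_head?_ne {α : Type*} (a : α) (l : List α) :
    ∃ r y, l = List.replicate r a ++ y ∧ y.head? ≠ some a := by
  induction l with
  | nil => exact ⟨0, [], rfl, by simp⟩
  | cons b l ih =>
    by_cases hb : b = a
    · obtain ⟨r, y, rfl, hy⟩ := ih
      exact ⟨r + 1, y, by simp [hb, List.replicate_succ], hy⟩
    · exact ⟨0, b :: l, rfl, by simpa using hb⟩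

lemma List.eq_replicate_of_isChain_ge {α : Type*} [PartialOrder α] {a : α} {l : List α}
    (hl : l.IsChain (· ≥ ·)) (hhead : l.head? = some a) (hlast : l.getLast? = some a) :
    l = List.replicate l.length a := by
  have hne : l ≠ [] := by rintro rfl; simp at hhead
  rw [List.head?_eq_some_head hne, Option.some_inj] at hhead
  rw [List.getLast?_eq_some_getLast hne, Option.some_inj] at hlast
  refine List.eq_replicate_iff.2 ⟨rfl, fun b hb => le_antisymm ?_ ?_⟩
  · exact hhead ▸ hl.pairwise.rel_head hb
  · exact hlast ▸ hl.pairwise.rel_getLast hb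

theorem IsAscentSeq.eq_replicate_zero_append_replicate_one {x : List ℕ} (hx : IsAscentSeq x)
    (hasc : ascents x = 1) (hlast : x.getLast? ≠ some 0) :
    ∃ r ℓ, 1 ≤ r ∧ 1 ≤ ℓ ∧ x = List.replicate r 0 ++ List.replicate ℓ 1 := by
  obtain ⟨r, y, rfl, hy⟩ := List.exists_eq_replicate_append_head?_ne 0 x
  obtain _ | ⟨v, t⟩ := y
  · rw [List.append_nil, ascents_replicate] at hasc
    exact absurd hasc zero_ne_one
  have hv0 : v ≠ 0 := by simpa using hy
  obtain _ | r := r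
  · exact absurd (by simpa using hx.1 (by simp)) hv0
  have hchain : (v :: t).IsChain (· ≥ ·) := by
    rw [ascents_replicate_append, ascents_cons_cons, if_pos (Nat.pos_of_ne_zero hv0)] at hasc
    exact (ascents_eq_zero_iff _).1 (by omega)
  have hv1 : v = 1 := by
    have hv : v ≤ ascents (List.replicate (r + 1) 0) + 1 := by
      simpa using hx.2 ⟨r + 1, by simp⟩ r.succ_pos
    rw [ascents_replicate] at hv
    omega
  subst hv1
  have hlast' : (1 :: t).getLast? = some 1 := by
    rw [List.getLast?_append_cons] at hlast
    rw [List.getLast?_eq_some_getLast (List.cons_ne_nil 1 t)] at hlast ⊢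
    simp only [ne_eq, Option.some_inj] at hlast ⊢
    have hle := hchain.pairwise.rel_getLast (List.mem_cons_self ..)
    omega
  exact ⟨r + 1, t.length + 1, by omega, by omega,
    by rw [← List.length_cons, ← List.eq_replicate_of_isChain_ge hchain rfl hlast']⟩

lemma fwd_append_cons_cons {l s : List ℕ} {a b : ℕ} (hab : a < b)
    (hs : (b :: s).IsChain (· ≥ ·)) : fwd (l ++ a :: b :: s) = s.length + 1 := by
  have hlen : (l ++ a :: b :: s).length = l.length + 1 + (s.length + 1) := by
    simp only [List.length_append, List.length_cons]; omega
  rw [fwd, Nat.findGreatest_eq_iff, hlen]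
  refine ⟨by omega, fun _ => ?_, fun k hk hkle hchain => ?_⟩
  · rwa [List.drop_append, List.drop_of_length_le (by omega), List.nil_append,
      show l.length + 1 + (s.length + 1) - (s.length + 1) - l.length = 1 by omega]
  · rw [List.drop_append_of_le_length (by omega)] at hchain
    have := List.isChain_cons_cons.1 hchain.right_of_append
    omega

lemma avoids_0012_of_forall_le_one {p : List ℕ} (hp : ∀ b ∈ p, b ≤ 1) :
    Avoids p [0, 0, 1, 2] := by
  rintro ⟨f, -, hf⟩
  have h02 := (hf 0 2).1 (by decide)
  have h23 := (hf 2 3).1 (by decide)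
  have := hp _ (List.get_mem _ (f 3))
  omega

lemma isAscentSeq_zero_cons_of_forall_le_one {l : List ℕ} (hl : ∀ b ∈ l, b ≤ 1) :
    IsAscentSeq (0 :: l) := by
  have hle : ∀ b ∈ 0 :: l, b ≤ 1 := List.forall_mem_cons.2 ⟨zero_le_one, hl⟩
  exact ⟨fun _ => rfl, fun i _ => (hle _ (List.get_mem _ i)).trans (Nat.le_add_left _ _)⟩

section ZeroOneSeq

variable {r ℓ : ℕ}

lemma forall_mem_replicate_zero_append_replicate_one_le_one :
    ∀ b ∈ List.replicate r 0 ++ List.replicate ℓ 1, b ≤ 1 := by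
  intro b hb
  rcases List.mem_append.1 hb with h | h <;> simp [List.eq_of_mem_replicate h]

lemma count_zero_replicate_zero_append_replicate_one :
    (List.replicate r 0 ++ List.replicate ℓ 1).count 0 = r := by
  simp [List.count_replicate]

lemma isAscentSeq_replicate_zero_append_replicate_one (hr : 1 ≤ r) :
    IsAscentSeq (List.replicate r 0 ++ List.replicate ℓ 1) := by
  obtain ⟨r, rfl⟩ := Nat.exists_eq_add_of_le' hr
  exact isAscentSeq_zero_cons_of_forall_le_one fun b hb =>
    forall_mem_replicate_zero_append_replicate_one_le_one (r := r + 1) b (List.mem_cons_of_mem 0 hb)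

lemma ascents_replicate_zero_append_replicate_one (hr : 1 ≤ r) (hℓ : 1 ≤ ℓ) :
    ascents (List.replicate r 0 ++ List.replicate ℓ 1) = 1 := by
  obtain ⟨r, rfl⟩ := Nat.exists_eq_add_of_le' hr
  obtain ⟨ℓ, rfl⟩ := Nat.exists_eq_add_of_le' hℓ
  rw [ascents_replicate_append, List.replicate_succ, ascents_cons_cons, ← List.replicate_succ,
    ascents_replicate]
  rfl

lemma fwd_replicate_zero_append_replicate_one (hr : 1 ≤ r) (hℓ : 1 ≤ ℓ) :
    fwd (List.replicate r 0 ++ List.replicate ℓ 1) = ℓ := by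
  obtain ⟨r, rfl⟩ := Nat.exists_eq_add_of_le' hr
  obtain ⟨ℓ, rfl⟩ := Nat.exists_eq_add_of_le' hℓ
  have hones : (List.replicate (ℓ + 1) 1).IsChain (· ≥ ·) := List.isChain_replicate_of_rel _ le_rfl
  rw [List.replicate_succ', List.append_assoc, List.replicate_succ, List.singleton_append,
    fwd_append_cons_cons zero_lt_one hones, List.length_replicate]

lemma getLast?_replicate_zero_append_replicate_one (hℓ : 1 ≤ ℓ) :
    (List.replicate r 0 ++ List.replicate ℓ 1).getLast? = some 1 := by
  obtain ⟨ℓ, rfl⟩ := Nat.exists_eq_add_of_le' hℓ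
  rw [List.replicate_succ', ← List.append_assoc, List.getLast?_concat]

end ZeroOneSeq

theorem bseq_one_ascent_general (n r ℓ : ℕ) :
    bseq n 1 r ℓ = if r + ℓ = n ∧ 1 ≤ r ∧ 1 ≤ ℓ then 1 else 0 := by
  have hset : {x : List ℕ | x.length = n ∧ IsAscentSeq x ∧ Avoids x [0, 0, 1, 2] ∧
      x.getLast? ≠ some 0 ∧ ascents x = 1 ∧ x.count 0 = r ∧ fwd x = ℓ} =
      {x | (r + ℓ = n ∧ 1 ≤ r ∧ 1 ≤ ℓ) ∧ x = List.replicate r 0 ++ List.replicate ℓ 1} := by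
    ext x
    constructor
    · rintro ⟨rfl, hx, -, hlast, hasc, rfl, rfl⟩
      obtain ⟨r, ℓ, hr, hℓ, rfl⟩ := hx.eq_replicate_zero_append_replicate_one hasc hlast
      rw [count_zero_replicate_zero_append_replicate_one,
        fwd_replicate_zero_append_replicate_one hr hℓ]
      simp [hr, hℓ]
    · rintro ⟨⟨rfl, hr, hℓ⟩, rfl⟩
      refine ⟨by simp, isAscentSeq_replicate_zero_append_replicate_one hr,
        avoids_0012_of_forall_le_one forall_mem_replicate_zero_append_replicate_one_le_one,
        by simp [getLast?_replicate_zero_append_replicate_one hℓ],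
        ascents_replicate_zero_append_replicate_one hr hℓ,
        count_zero_replicate_zero_append_replicate_one,
        fwd_replicate_zero_append_replicate_one hr hℓ⟩
  rw [bseq, hset]
  split_ifs with h <;> simp [h]

/-- For `n ≥ 2`, `b_{n,1,r,ℓ}` equals `1` if `r + ℓ = n` with `1 ≤ r, ℓ ≤ n-1`,
and `0` otherwise. -/
theorem bseq_one_ascent (n r ℓ : ℕ) (hn : 2 ≤ n) :
    bseq n 1 r ℓ = if r + ℓ = n ∧ 1 ≤ r ∧ 1 ≤ ℓ then 1 else 0 :=
  bseq_one_ascent_general n r ℓ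
end

section
/- For n ≥ 2 and 2 ≤ t ≤ n, the number a_{n,t,1} of canonical sequential forms of partitions of {1,…,n} that avoid the pattern 12123, have at least two distinct letters, have the leftmost occurrence of the largest letter at position t, and the leftmost occurrence of the second largest letter at position 1, equals 2^{n−t}. -/
/-- `p` is a restricted growth function: a sequence of positive integers starting
with `1` in which each letter exceeds the maximum of the preceding letters by at
most one. -/
def IsRGF (p : List ℕ) : Prop :=
  (∀ h : 0 < p.length, p.get ⟨0, h⟩ = 1) ∧
  (∀ a ∈ p, 1 ≤ a) ∧
  ∀ i : Fin p.length, 0 < (i : ℕ) → p.get i ≤ (p.take (i : ℕ)).foldr max 0 + 1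

/-- The largest letter of a sequence. -/
def maxLetter (p : List ℕ) : ℕ := p.foldr max 0

/-- `aRGF n t s` is the number of RGFs of length `n` avoiding the pattern `12123`,
having at least two distinct letters, in which the leftmost occurrence of the
largest letter is at (1-indexed) position `t` and the leftmost occurrence of the
second largest letter is at position `s`.  (For an RGF with largest letter `M`
having at least two distinct letters, the second largest letter is `M - 1`.) -/
noncomputable def aRGF (n t s : ℕ) : ℕ :=
  {p : List ℕ | p.length = n ∧ IsRGF p ∧ Avoids p [1, 2, 1, 2, 3] ∧
    2 ≤ p.toFinset.card ∧
    p.idxOf (maxLetter p) + 1 = t ∧ p.idxOf (maxLetter p - 1) + 1 = s}.ncard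

/-!
The first letter of an RGF is `1`, so `s = 1` forces the second largest letter to be `1` and
the largest to be `2`. Hence the RGFs counted are exactly the words `1^(t-1) 2 w` with
`w ∈ {1,2}^(n-t)` arbitrary; these are RGFs, and having only two distinct letters they avoid
`12123`.
-/

lemma le_maxLetter {p : List ℕ} {a : ℕ} (h : a ∈ p) : a ≤ maxLetter p :=
  List.le_max_of_le h le_rfl

lemma maxLetter_le {p : List ℕ} {m : ℕ} (h : ∀ a ∈ p, a ≤ m) : maxLetter p ≤ m :=
  List.max_le_of_forall_le p m h

lemma maxLetter_mem {p : List ℕ} (h : p ≠ []) : maxLetter p ∈ p :=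
  List.maximum_mem (List.foldr_max_of_ne_nil h).symm

lemma avoids_12123_of_forall_eq_one_or_two {p : List ℕ} (hp : ∀ a ∈ p, a = 1 ∨ a = 2) :
    Avoids p [1, 2, 1, 2, 3] := by
  rintro ⟨f, -, hiso⟩
  have h01 := (hiso ⟨0, by simp⟩ ⟨1, by simp⟩).1 (by decide)
  have h14 := (hiso ⟨1, by simp⟩ ⟨4, by simp⟩).1 (by decide)
  have h0 := hp _ (p.get_mem (f ⟨0, by simp⟩))
  have h4 := hp _ (p.get_mem (f ⟨4, by simp⟩))
  omega

lemma isRGF_one_cons {l : List ℕ} (hl : ∀ a ∈ l, a = 1 ∨ a = 2) : IsRGF (1 :: l) := by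
  have hp : ∀ a ∈ 1 :: l, a = 1 ∨ a = 2 := by simpa using hl
  refine ⟨fun _ => rfl, fun a ha => by rcases hp a ha with rfl | rfl <;> decide, ?_⟩
  rintro ⟨_ | i, hi⟩ hpos
  · exact absurd hpos (lt_irrefl 0)
  · have hone : 1 ≤ ((1 :: l).take (i + 1)).foldr max 0 := le_maxLetter (by simp)
    have htwo : (1 :: l).get ⟨i + 1, hi⟩ ≤ 2 := by
      rcases hp _ (List.get_mem (1 :: l) ⟨i + 1, hi⟩) with h | h <;> omega
    show _ ≤ ((1 :: l).take (i + 1)).foldr max 0 + 1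
    omega

/-- The word `1^k 2 w`, with the bits of `w` read as the letters `1` (false) and `2` (true). -/
def oneTwoWord (k : ℕ) (w : List Bool) : List ℕ :=
  List.replicate k 1 ++ 2 :: w.map (fun b => cond b 2 1)

lemma oneTwoWord_succ (k : ℕ) (w : List Bool) : oneTwoWord (k + 1) w = 1 :: oneTwoWord k w :=
  rfl

lemma length_oneTwoWord (k : ℕ) (w : List Bool) : (oneTwoWord k w).length = k + 1 + w.length := by
  simp only [oneTwoWord, List.length_append, List.length_replicate, List.length_cons,
    List.length_map]
  omega

lemma eq_one_or_two_of_mem_oneTwoWord {k : ℕ} {w : List Bool} {a : ℕ}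
    (h : a ∈ oneTwoWord k w) : a = 1 ∨ a = 2 := by
  simp only [oneTwoWord, List.mem_append, List.mem_replicate, List.mem_cons, List.mem_map] at h
  rcases h with ⟨-, rfl⟩ | rfl | ⟨_ | _, -, rfl⟩ <;> simp

lemma two_mem_oneTwoWord (k : ℕ) (w : List Bool) : 2 ∈ oneTwoWord k w := by
  simp [oneTwoWord]

lemma maxLetter_oneTwoWord (k : ℕ) (w : List Bool) : maxLetter (oneTwoWord k w) = 2 :=
  le_antisymm
    (maxLetter_le fun _ ha => by rcases eq_one_or_two_of_mem_oneTwoWord ha with rfl | rfl <;> simp)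
    (le_maxLetter (two_mem_oneTwoWord k w))

lemma idxOf_two_oneTwoWord (k : ℕ) (w : List Bool) : (oneTwoWord k w).idxOf 2 = k := by
  induction k with
  | zero => exact List.idxOf_cons_self
  | succ k ih => rw [oneTwoWord_succ, List.idxOf_cons_ne _ (by decide), ih]

lemma two_le_card_toFinset_oneTwoWord_succ (k : ℕ) (w : List Bool) :
    2 ≤ (oneTwoWord (k + 1) w).toFinset.card := by
  have hsub : ({1, 2} : Finset ℕ) ⊆ (oneTwoWord (k + 1) w).toFinset := by
    intro a ha
    rw [Finset.mem_insert, Finset.mem_singleton] at ha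
    rw [List.mem_toFinset, oneTwoWord_succ]
    rcases ha with rfl | rfl
    exacts [List.mem_cons_self, List.mem_cons_of_mem _ (two_mem_oneTwoWord k w)]
  simpa using Finset.card_le_card hsub

lemma oneTwoWord_injective (k : ℕ) : Function.Injective (oneTwoWord k) := by
  intro w₁ w₂ h
  have hmap := List.cons_injective (List.append_cancel_left h)
  exact (List.map_injective_iff.2 (by decide)) hmap

lemma exists_eq_oneTwoWord {p : List ℕ} (hp : ∀ a ∈ p, a = 1 ∨ a = 2) (h2 : 2 ∈ p) :
    ∃ k w, p = oneTwoWord k w := by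
  induction p with
  | nil => simp at h2
  | cons a l ih =>
    rcases hp a (by simp) with rfl | rfl
    · obtain ⟨k, w, rfl⟩ := ih (fun b hb => hp b (by simp [hb])) (by simpa using h2)
      exact ⟨k + 1, w, rfl⟩
    · have hl : l ∈ Set.range (List.map fun b : Bool => cond b 2 1) := by
        rw [Set.range_list_map]
        intro b hb
        rcases hp b (by simp [hb]) with rfl | rfl
        exacts [⟨false, rfl⟩, ⟨true, rfl⟩]
      obtain ⟨w, rfl⟩ := hl
      exact ⟨0, w, rfl⟩

lemma exists_eq_oneTwoWord_of_isRGF {p : List ℕ} (hp : IsRGF p) (hne : p ≠ [])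
    (hs : p.idxOf (maxLetter p - 1) = 0) : ∃ k w, p = oneTwoWord k w := by
  obtain ⟨a, l, rfl⟩ := List.exists_cons_of_ne_nil hne
  have ha : a = 1 := hp.1 (by simp)
  have hM : maxLetter (a :: l) = 2 := by
    by_cases h : a = maxLetter (a :: l) - 1
    · omega
    · rw [List.idxOf_cons_ne _ h] at hs
      exact absurd hs (Nat.succ_ne_zero _)
  refine exists_eq_oneTwoWord (fun b hb => ?_) (hM ▸ maxLetter_mem hne)
  have hb1 := hp.2.1 b hb
  have hbM := le_maxLetter hb
  omega

lemma ncard_setOf_length_eq (α : Type*) [Fintype α] (m : ℕ) :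
    {l : List α | l.length = m}.ncard = Fintype.card α ^ m := by
  calc {l : List α | l.length = m}.ncard = Nat.card (List.Vector α m) :=
      (Nat.card_coe_set_eq _).symm
    _ = Fintype.card α ^ m := by rw [Nat.card_eq_fintype_card, card_vector]

theorem aRGF_s_eq_one_general (n t : ℕ) (ht : 2 ≤ t) (htn : t ≤ n) :
    aRGF n t 1 = 2 ^ (n - t) := by
  rw [aRGF, ← Fintype.card_bool, ← ncard_setOf_length_eq,
    ← Set.ncard_image_of_injective _ (oneTwoWord_injective (t - 1))]
  congr 1
  ext p
  simp only [Set.mem_image, Set.mem_ofPred_eq]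
  constructor
  · rintro ⟨hlen, hp, -, -, hmax, hs⟩
    obtain ⟨k, w, rfl⟩ := exists_eq_oneTwoWord_of_isRGF hp
      (List.ne_nil_of_length_pos (by omega)) (by omega)
    rw [maxLetter_oneTwoWord, idxOf_two_oneTwoWord] at hmax
    rw [length_oneTwoWord] at hlen
    exact ⟨w, by omega, by rw [← hmax, Nat.add_sub_cancel]⟩
  · rintro ⟨w, hw, rfl⟩
    obtain ⟨k, hk⟩ : ∃ k, t - 1 = k + 1 := ⟨t - 2, by omega⟩
    rw [hk]
    refine ⟨by rw [length_oneTwoWord]; omega,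
      isRGF_one_cons fun _ => eq_one_or_two_of_mem_oneTwoWord,
      avoids_12123_of_forall_eq_one_or_two fun _ => eq_one_or_two_of_mem_oneTwoWord,
      two_le_card_toFinset_oneTwoWord_succ k w,
      by rw [maxLetter_oneTwoWord, idxOf_two_oneTwoWord]; omega,
      by rw [maxLetter_oneTwoWord, oneTwoWord_succ, List.idxOf_cons_self]⟩

/-- For `n ≥ 2` and `2 ≤ t ≤ n`, `a_{n,t,1} = 2^{n-t}`. -/
theorem aRGF_s_eq_one (n t : ℕ) (hn : 2 ≤ n) (ht : 2 ≤ t) (htn : t ≤ n) :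
    aRGF n t 1 = 2 ^ (n - t) :=
  aRGF_s_eq_one_general n t ht htn
end

section
/- For n ≥ 2 and 0 ≤ s < r ≤ m, the numbers c_{n,m,r,s} and d_{n,m,r,s} satisfy c_{n,m,r,s} = c_{n−1,m,r,s} + d_{n,m,r,s} + Σ_{i=0}^{s−1} c_{n−1,m−1,r,i}; moreover, for n ≥ 2 and 0 ≤ r ≤ m, d_{n,m,r,r} = c_{n−1,m,r,r}. -/
/-- `cA n m r s` is the number of 210-avoiding ascent sequences of length `n` with
exactly `m` ascents, largest letter `r`, and last letter `s`. -/
noncomputable def cA (n m r s : ℕ) : ℕ :=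
  {x : List ℕ | x.length = n ∧ IsAscentSeq x ∧ Avoids x [2, 1, 0] ∧
    ascents x = m ∧ x.foldr max 0 = r ∧ x.getLast? = some s}.ncard

/-- `dA n m r s` is the number of 210-avoiding ascent sequences of length `n` with
exactly `m` ascents, largest letter `r`, last letter `s`, and next-to-last
letter equal to `r`. -/
noncomputable def dA (n m r s : ℕ) : ℕ :=
  {x : List ℕ | x.length = n ∧ IsAscentSeq x ∧ Avoids x [2, 1, 0] ∧
    ascents x = m ∧ x.foldr max 0 = r ∧ x.getLast? = some s ∧
    x.dropLast.getLast? = some r}.ncard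

lemma ascents_append_singleton {y : List ℕ} {t : ℕ} (hy : y.getLast? = some t) (s : ℕ) :
    ascents (y ++ [s]) = ascents y + if t < s then 1 else 0 := by
  induction y with
  | nil => simp at hy
  | cons a y ih =>
    cases y with
    | nil =>
      obtain rfl : a = t := by simpa using hy
      by_cases h : a < s <;> simp [ascents, h]
    | cons b y =>
      rw [List.getLast?_cons_cons] at hy
      rw [List.cons_append, List.cons_append, ascents_cons_cons, ← List.cons_append, ih hy,
        ascents_cons_cons, Nat.add_assoc]

lemma isAscentSeq_iff (x : List ℕ) :
    IsAscentSeq x ↔ (∀ h : 0 < x.length, x[0] = 0) ∧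
      ∀ i (h : i < x.length), 0 < i → x[i] ≤ ascents (x.take i) + 1 := by
  simp only [IsAscentSeq, Fin.forall_iff, List.get_eq_getElem]

lemma isAscentSeq_append_singleton {y : List ℕ} (hy : y ≠ []) (s : ℕ) :
    IsAscentSeq (y ++ [s]) ↔ IsAscentSeq y ∧ s ≤ ascents y + 1 := by
  have hpos : 0 < y.length := List.length_pos_iff.mpr hy
  have hprefix : ∀ i (hi : i < y.length),
      (y ++ [s])[i]'(by simp; omega) ≤ ascents ((y ++ [s]).take i) + 1 ↔
        y[i] ≤ ascents (y.take i) + 1 := by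
    intro i hi
    rw [List.getElem_append_left hi, List.take_append_of_le_length hi.le]
  have hlast : (y ++ [s])[y.length] ≤ ascents ((y ++ [s]).take y.length) + 1 ↔
      s ≤ ascents y + 1 := by
    simp
  simp only [isAscentSeq_iff, List.length_append, List.length_singleton,
    List.getElem_append_left hpos]
  constructor
  · rintro ⟨h0, hstep⟩
    exact ⟨⟨fun _ => h0 (by omega), fun i hi hi0 => (hprefix i hi).mp (hstep i (by omega) hi0)⟩,
      hlast.mp (hstep _ (by omega) hpos)⟩
  · rintro ⟨⟨h0, hstep⟩, hs⟩
    refine ⟨fun _ => h0 hpos, fun i hi hi0 => ?_⟩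
    rcases Nat.lt_succ_iff_lt_or_eq.mp hi with hi | rfl
    · exact (hprefix i hi).mpr (hstep i hi hi0)
    · exact hlast.mpr hs

lemma List.sublist_append_singleton_iff {α : Type*} {l y : List α} {s : α} :
    l.Sublist (y ++ [s]) ↔ l.Sublist y ∨ ∃ l', l = l' ++ [s] ∧ l'.Sublist y := by
  constructor
  · intro h
    obtain ⟨l₁, l₂, rfl, h₁, h₂⟩ := List.sublist_append_iff.mp h
    rcases List.sublist_singleton.mp h₂ with rfl | rfl
    · exact .inl (by simpa using h₁)
    · exact .inr ⟨l₁, rfl, h₁⟩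
  · rintro (h | ⟨l', rfl, h⟩)
    · exact h.trans (List.sublist_append_left y [s])
    · exact h.append_right [s]

def Has210 (p : List ℕ) : Prop := ∃ a b c : ℕ, c < b ∧ b < a ∧ [a, b, c].Sublist p

lemma contains_210_iff_has210 (p : List ℕ) : Contains p [2, 1, 0] ↔ Has210 p := by
  constructor
  · rintro ⟨f, hmono, hiff⟩
    refine ⟨p.get (f ⟨0, by simp⟩), p.get (f ⟨1, by simp⟩), p.get (f ⟨2, by simp⟩),
      (hiff ⟨2, by simp⟩ ⟨1, by simp⟩).mp (by simp),
      (hiff ⟨1, by simp⟩ ⟨0, by simp⟩).mp (by simp), ?_⟩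
    rw [List.sublist_iff_exists_fin_orderEmbedding_get_eq]
    refine ⟨OrderEmbedding.ofStrictMono (fun i => f ⟨i, by simp⟩)
      (fun i j hij => hmono (by simpa using hij)), fun i => ?_⟩
    fin_cases i <;> rfl
  · rintro ⟨a, b, c, hcb, hba, hsub⟩
    obtain ⟨f, hf⟩ := List.sublist_iff_exists_fin_orderEmbedding_get_eq.mp hsub
    refine ⟨fun i => f ⟨i, by simp⟩,
      fun i j hij => f.strictMono (by simpa using hij), ?_⟩
    have h0 : p.get (f ⟨0, by simp⟩) = a := (hf ⟨0, by simp⟩).symm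
    have h1 : p.get (f ⟨1, by simp⟩) = b := (hf ⟨1, by simp⟩).symm
    have h2 : p.get (f ⟨2, by simp⟩) = c := (hf ⟨2, by simp⟩).symm
    intro i j
    fin_cases i <;> fin_cases j <;> simp_all <;> omega

lemma Has210.mono {l p : List ℕ} (h : Has210 l) (hlp : l.Sublist p) : Has210 p :=
  let ⟨a, b, c, hcb, hba, hsub⟩ := h
  ⟨a, b, c, hcb, hba, hsub.trans hlp⟩

/-- The `21` of a new `210` would end strictly above the old last letter, which already
completes it to a `210`. -/
lemma not_has210_append_singleton {y : List ℕ} {t s : ℕ} (hy : y.getLast? = some t)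
    (hts : t ≤ s) (h : ¬ Has210 y) : ¬ Has210 (y ++ [s]) := by
  obtain ⟨y', rfl⟩ := List.getLast?_eq_some_iff.mp hy
  rintro ⟨a, b, c, hcb, hba, habc⟩
  rcases List.sublist_append_singleton_iff.mp habc with habc | ⟨l, hl, hab⟩
  · exact h ⟨a, b, c, hcb, hba, habc⟩
  obtain ⟨rfl, rfl⟩ := List.append_singleton_inj.mp (show [a, b] ++ [c] = l ++ [s] from hl)
  rcases List.sublist_append_singleton_iff.mp hab with hab | ⟨l', hl', -⟩
  · exact h ⟨a, b, t, by omega, hba, hab.append_right [t]⟩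
  · obtain ⟨-, rfl⟩ := List.append_singleton_inj.mp (show [a] ++ [b] = l' ++ [t] from hl')
    omega

lemma foldr_max_append_singleton (y : List ℕ) (s : ℕ) :
    (y ++ [s]).foldr max 0 = max (y.foldr max 0) s := by
  induction y with
  | nil => simp
  | cons a y ih => simp [ih, max_assoc]

lemma le_foldr_max {l : List ℕ} {a : ℕ} (h : a ∈ l) : a ≤ l.foldr max 0 :=
  List.le_max_of_le' 0 h le_rfl

lemma foldr_max_mem {l : List ℕ} (h : l.foldr max 0 ≠ 0) : l.foldr max 0 ∈ l := by
  induction l with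
  | nil => simp at h
  | cons b l ih =>
    simp only [List.foldr_cons] at h ⊢
    rcases le_total b (l.foldr max 0) with hle | hle
    · rw [max_eq_right hle] at h ⊢
      exact List.mem_cons_of_mem _ (ih h)
    · rw [max_eq_left hle]
      exact List.mem_cons_self

def cSet (n m r s : ℕ) : Set (List ℕ) :=
  {x | x.length = n ∧ IsAscentSeq x ∧ Avoids x [2, 1, 0] ∧
    ascents x = m ∧ x.foldr max 0 = r ∧ x.getLast? = some s}

def cFiber (n m r s t : ℕ) : Set (List ℕ) :=
  {x ∈ cSet n m r s | x.dropLast.getLast? = some t}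

lemma cA_eq_ncard (n m r s : ℕ) : cA n m r s = (cSet n m r s).ncard := rfl

lemma dA_eq_ncard (n m r s : ℕ) : dA n m r s = (cFiber n m r s r).ncard := by
  simp only [dA, cFiber, cSet, Set.sep_ofPred, and_assoc]

lemma cSet_finite (n m r s : ℕ) : (cSet n m r s).Finite := by
  refine ((List.finite_length_eq (Fin (r + 1)) n).image (List.map Fin.val)).subset ?_
  rintro x ⟨hlen, -, -, -, hmax, -⟩
  refine ⟨x.attach.map fun a => ⟨a.1, Nat.lt_succ_of_le (hmax ▸ le_foldr_max a.2)⟩, ?_, ?_⟩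
  · simpa using hlen
  · simp [Function.comp_def]

lemma mem_cSet_append_singleton_iff {n m r s t : ℕ} {y : List ℕ} (hy : y.getLast? = some t)
    (hts : t ≤ s) :
    y ++ [s] ∈ cSet (n + 1) m r s ↔
      y.length = n ∧ IsAscentSeq y ∧ s ≤ ascents y + 1 ∧ Avoids y [2, 1, 0] ∧
        ascents y + (if t < s then 1 else 0) = m ∧ max (y.foldr max 0) s = r := by
  have hne : y ≠ [] := by rintro rfl; simp at hy
  have havoid : Avoids (y ++ [s]) [2, 1, 0] ↔ Avoids y [2, 1, 0] := by
    simp only [Avoids, contains_210_iff_has210]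
    exact ⟨fun h h' => h (h'.mono (List.sublist_append_left y [s])),
      not_has210_append_singleton hy hts⟩
  simp only [cSet, Set.mem_ofPred_eq, List.length_append, List.length_singleton,
    Nat.add_right_cancel_iff, isAscentSeq_append_singleton hne, havoid,
    ascents_append_singleton hy, foldr_max_append_singleton, List.getLast?_concat, and_true,
    and_assoc]

lemma cFiber_eq_image (n m r s t : ℕ) :
    cFiber n m r s t =
      (· ++ [s]) '' {y | y.getLast? = some t ∧ y ++ [s] ∈ cSet n m r s} := by
  ext x
  constructor
  · rintro ⟨hx, hprev⟩
    obtain ⟨y, rfl⟩ := List.getLast?_eq_some_iff.mp hx.2.2.2.2.2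
    rw [List.dropLast_concat] at hprev
    exact ⟨y, ⟨hprev, hx⟩, rfl⟩
  · rintro ⟨y, ⟨hy, hx⟩, rfl⟩
    exact ⟨hx, by rwa [List.dropLast_concat]⟩

lemma ncard_cFiber_eq_ncard (n m r s t : ℕ) :
    (cFiber n m r s t).ncard =
      {y | y.getLast? = some t ∧ y ++ [s] ∈ cSet n m r s}.ncard := by
  rw [cFiber_eq_image, Set.ncard_image_of_injective _ (List.append_left_injective [s])]

lemma ncard_cFiber_self {n m r s : ℕ} (hs : s ≤ m + 1) :
    (cFiber (n + 1) m r s s).ncard = cA n m r s := by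
  rw [ncard_cFiber_eq_ncard, cA_eq_ncard]
  congr 1
  ext y
  constructor
  · rintro ⟨hy, hx⟩
    obtain ⟨hlen, hasc, -, hav, hm, hr⟩ := (mem_cSet_append_singleton_iff hy le_rfl).mp hx
    have hsy := le_foldr_max (List.mem_of_getLast? hy)
    exact ⟨hlen, hasc, hav, by simpa using hm, by omega, hy⟩
  · rintro ⟨hlen, hasc, hav, hm, hr, hy⟩
    have hsy := le_foldr_max (List.mem_of_getLast? hy)
    exact ⟨hy, (mem_cSet_append_singleton_iff hy le_rfl).mpr
      ⟨hlen, hasc, by omega, hav, by simpa using hm, by omega⟩⟩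

lemma ncard_cFiber_of_lt {n m r s t : ℕ} (hts : t < s) (hsr : s < r) (hs : s ≤ m + 1) :
    (cFiber (n + 1) (m + 1) r s t).ncard = cA n m r t := by
  rw [ncard_cFiber_eq_ncard, cA_eq_ncard]
  congr 1
  ext y
  constructor
  · rintro ⟨hy, hx⟩
    obtain ⟨hlen, hasc, -, hav, hm, hr⟩ :=
      (mem_cSet_append_singleton_iff hy hts.le).mp hx
    rw [if_pos hts] at hm
    exact ⟨hlen, hasc, hav, by omega, by omega, hy⟩
  · rintro ⟨hlen, hasc, hav, rfl, rfl, hy⟩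
    exact ⟨hy, (mem_cSet_append_singleton_iff hy hts.le).mpr
      ⟨hlen, hasc, by omega, hav, by simp [hts], by omega⟩⟩

lemma cFiber_eq_empty {n m r s t : ℕ} (hst : s < t) (htr : t < r) : cFiber n m r s t = ∅ := by
  refine Set.eq_empty_of_forall_notMem ?_
  rintro x ⟨⟨-, -, hav, -, hmax, hlast⟩, hprev⟩
  obtain ⟨y, rfl⟩ := List.getLast?_eq_some_iff.mp hlast
  rw [List.dropLast_concat] at hprev
  obtain ⟨z, rfl⟩ := List.getLast?_eq_some_iff.mp hprev
  have hmem : r ∈ z := by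
    have := foldr_max_mem (l := z ++ [t] ++ [s]) (by omega)
    rw [hmax] at this
    simpa [htr.ne', (hst.trans htr).ne'] using this
  apply hav
  rw [contains_210_iff_has210]
  exact ⟨r, t, s, hst, htr,
    ((List.singleton_sublist.mpr hmem).append (.refl [t])).append_right [s]⟩

lemma cA_eq_sum_ncard_cFiber (n m r s : ℕ) :
    cA (n + 2) m r s = ∑ t ∈ Finset.range (r + 1), (cFiber (n + 2) m r s t).ncard := by
  have hcover : cSet (n + 2) m r s =
      ⋃ t ∈ (Finset.range (r + 1) : Set ℕ), cFiber (n + 2) m r s t := by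
    ext x
    simp only [Set.mem_iUnion, Finset.coe_range, Set.mem_Iio, exists_prop]
    constructor
    · intro hx
      obtain ⟨hlen, -, -, -, hmax, hlast⟩ := id hx
      obtain ⟨y, rfl⟩ := List.getLast?_eq_some_iff.mp hlast
      obtain ⟨t, ht⟩ : ∃ t, y.getLast? = some t :=
        Option.isSome_iff_exists.mp (List.getLast?_isSome.mpr (by rintro rfl; simp at hlen))
      have htr : t ≤ r := hmax ▸ le_foldr_max (by simp [List.mem_of_getLast? ht])
      exact ⟨t, by omega, hx, by rwa [List.dropLast_concat]⟩
    · rintro ⟨t, -, hx, -⟩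
      exact hx
  rw [cA_eq_ncard, hcover, (Finset.range (r + 1)).finite_toSet.ncard_biUnion,
    finsum_mem_coe_finset]
  · exact fun t _ => (cSet_finite _ _ _ _).subset (Set.sep_subset _ _)
  · intro i _ j _ hij
    refine Set.disjoint_left.mpr fun x hi hj => hij ?_
    exact Option.some_injective _ (hi.2.symm.trans hj.2)

/-- For `n ≥ 2`: `c_{n,m,r,s} = c_{n-1,m,r,s} + d_{n,m,r,s} + Σ_{i=0}^{s-1} c_{n-1,m-1,r,i}`
whenever `0 ≤ s < r ≤ m`, and `d_{n,m,r,r} = c_{n-1,m,r,r}` whenever `0 ≤ r ≤ m`. -/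
theorem cA_dA_recurrences (n : ℕ) (hn : 2 ≤ n) :
    (∀ m r s : ℕ, s < r → r ≤ m →
      cA n m r s
        = cA (n - 1) m r s + dA n m r s + ∑ i ∈ Finset.range s, cA (n - 1) (m - 1) r i)
    ∧ (∀ m r : ℕ, r ≤ m → dA n m r r = cA (n - 1) m r r) := by
  obtain ⟨n, rfl⟩ : ∃ k, n = k + 2 := ⟨n - 2, by omega⟩
  rw [show n + 2 - 1 = n + 1 from rfl]
  refine ⟨fun m r s hsr hrm => ?_, fun m r hrm => ?_⟩
  · obtain ⟨m, rfl⟩ : ∃ k, m = k + 1 := ⟨m - 1, by omega⟩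
    have hbelow :
        ∀ t ∈ Finset.range s, (cFiber (n + 2) (m + 1) r s t).ncard = cA (n + 1) m r t :=
      fun t ht => ncard_cFiber_of_lt (Finset.mem_range.mp ht) hsr (by omega)
    have hbetween : ∀ t ∈ Finset.Ico (s + 1) r, (cFiber (n + 2) (m + 1) r s t).ncard = 0 :=
      fun t ht => by
        rw [Finset.mem_Ico] at ht
        rw [cFiber_eq_empty (by omega) ht.2, Set.ncard_empty]
    rw [cA_eq_sum_ncard_cFiber, Finset.sum_range_succ,
      ← Finset.sum_range_add_sum_Ico _ (by omega : s + 1 ≤ r), Finset.sum_range_succ,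
      Finset.sum_congr rfl hbelow, Finset.sum_eq_zero hbetween,
      ncard_cFiber_self (by omega), ← dA_eq_ncard, Nat.add_sub_cancel]
    ring
  · rw [dA_eq_ncard, ncard_cFiber_self (by omega)]
end
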